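/- arXiv:math/0005122 — 2 statements merged into one kernel-verified Lean document; each statement's English description precedes it below -/
import Mathlib

section
/- For all real numbers p, q with p > 1, q > 1 and p ≠ q, and all integers L, a with L ≥ 1, a ≥ 1 and b := 2L + 1 − a ≥ 0, one has (q/p)·[2L]_{p,q}·[a]_{p,q} − [2L+1]_{p,q}·[a−1]_{p,q} ≠ [b]_{p,q}. (This expresses that for p ≠ q the two-parameter expressions (5.1) do not reduce to the single bracket [b] obtained at p = q, i.e. the finite-dimensional representations of the two-parametric deformation are not trivial deformations of the one-parametric ones.) -/
/-- The two-parameter bracket `[x]_{p,q} = (q^x - p^(-x))/(q - p⁻¹)`. -/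
noncomputable def pqBracket (p q : ℝ) (x : ℤ) : ℝ := (q ^ x - p ^ (-x)) / (q - p⁻¹)

theorem pqBracket_nontrivial_deformation (p q : ℝ) (hp : 1 < p) (hq : 1 < q) (hpq : p ≠ q)
    (L a b : ℤ) (hL : 1 ≤ L) (ha : 1 ≤ a) (hb : b = 2 * L + 1 - a) (hb0 : 0 ≤ b) :
    (q / p) * pqBracket p q (2 * L) * pqBracket p q a -
        pqBracket p q (2 * L + 1) * pqBracket p q (a - 1) ≠
      pqBracket p q b := by
  subst hb
  intro h
  obtain ⟨n, rfl⟩ : ∃ n : ℕ, a = (n : ℤ) := ⟨a.toNat, by omega⟩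
  have hn0 : n ≠ 0 := by omega
  have hp0 : (0:ℝ) < p := lt_trans one_pos hp
  have hq0 : (0:ℝ) < q := lt_trans one_pos hq
  have hp0' : p ≠ 0 := ne_of_gt hp0
  set u : ℝ := p * q with hu_def
  have hu : 1 < u := by nlinarith
  have hu0 : (0:ℝ) < u := lt_trans one_pos hu
  have hu0' : u ≠ 0 := ne_of_gt hu0
  have hu1 : u - 1 ≠ 0 := by nlinarith
  have hD : q - p⁻¹ ≠ 0 := by
    have : p⁻¹ < 1 := inv_lt_one_of_one_lt₀ hp
    nlinarith
  -- rewrite the two-parameter bracket via the single bracket in u = p*q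
  have key : ∀ x : ℤ, pqBracket p q x = p ^ (1 - x) * ((u ^ x - 1) / (u - 1)) := by
    intro x
    unfold pqBracket
    rw [div_eq_iff hD]
    have h1 : u ^ x = p ^ x * q ^ x := by rw [hu_def, mul_zpow]
    have h2 : p ^ (1 - x) = p * (p ^ x)⁻¹ := by
      rw [zpow_sub₀ hp0', zpow_one]
      rfl
    have h3 : p ^ (-x) = (p ^ x)⁻¹ := zpow_neg p x
    have hpx : p ^ x ≠ 0 := zpow_ne_zero x hp0'
    rw [h1, h2, h3]
    field_simp
    ring
  rw [key, key, key, key, key] at h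
  set X2 : ℝ := (u ^ (2*L) - 1) / (u - 1) with hX2
  set Xa : ℝ := (u ^ (n:ℤ) - 1) / (u - 1) with hXa
  set Y1 : ℝ := (u ^ (2*L+1) - 1) / (u - 1) with hY1
  set Y2 : ℝ := (u ^ ((n:ℤ)-1) - 1) / (u - 1) with hY2
  set Z : ℝ := (u ^ (2*L+1-(n:ℤ)) - 1) / (u - 1) with hZ
  have hz : ∀ m k : ℤ, p ^ m * p ^ k = p ^ (m + k) := fun m k => (zpow_add₀ hp0' m k).symm
  have hzc : ∀ k : ℤ, 0 ≤ k → ∀ hk : k = ((k.toNat : ℕ) : ℤ), True := fun _ _ _ => trivial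
  have k1 : p ^ (1 - 2*L) * p ^ (1 - (n:ℤ)) * p ^ (2*L + (n:ℤ)) = p * p := by
    rw [hz, hz, show (1 - 2*L + (1 - (n:ℤ)) + (2*L + (n:ℤ))) = ((2:ℕ):ℤ) by push_cast; ring,
      zpow_natCast]
    ring
  have k2 : p ^ (1 - (2*L+1)) * p ^ (1 - ((n:ℤ)-1)) * p ^ (2*L + (n:ℤ)) = p * p := by
    rw [hz, hz, show (1 - (2*L+1) + (1 - ((n:ℤ)-1)) + (2*L + (n:ℤ))) = ((2:ℕ):ℤ) by
      push_cast; ring, zpow_natCast]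
    ring
  have k3 : q / p * (p * p) = u := by
    rw [hu_def]; field_simp
  have k4 : p ^ (1 - (2*L+1-(n:ℤ))) * p ^ (2*L + (n:ℤ)) = (p*p) ^ n := by
    rw [hz, show (1 - (2*L+1-(n:ℤ)) + (2*L + (n:ℤ))) = ((2*n:ℕ):ℤ) by push_cast; ring,
      zpow_natCast, pow_mul, pow_two]
  have e1 : u * X2 * Xa - (p*p) * (Y1 * Y2) = (p*p) ^ n * Z := by
    have expand : (q / p * (p ^ (1 - 2*L) * X2) * (p ^ (1 - (n:ℤ)) * Xa)
          - p ^ (1 - (2*L+1)) * Y1 * (p ^ (1 - ((n:ℤ)-1)) * Y2)) * p ^ (2*L + (n:ℤ))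
        = u * X2 * Xa - (p*p) * (Y1 * Y2) := by
      calc (q / p * (p ^ (1 - 2*L) * X2) * (p ^ (1 - (n:ℤ)) * Xa)
              - p ^ (1 - (2*L+1)) * Y1 * (p ^ (1 - ((n:ℤ)-1)) * Y2)) * p ^ (2*L + (n:ℤ))
          = q / p * (p ^ (1 - 2*L) * p ^ (1 - (n:ℤ)) * p ^ (2*L + (n:ℤ))) * (X2 * Xa)
              - (p ^ (1 - (2*L+1)) * p ^ (1 - ((n:ℤ)-1)) * p ^ (2*L + (n:ℤ))) * (Y1 * Y2) := by
            ring
        _ = q / p * (p * p) * (X2 * Xa) - (p*p) * (Y1 * Y2) := by rw [k1, k2]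
        _ = u * X2 * Xa - (p*p) * (Y1 * Y2) := by rw [k3]; ring
    have expand2 : (p ^ (1 - (2*L+1-(n:ℤ))) * Z) * p ^ (2*L + (n:ℤ)) = (p*p) ^ n * Z := by
      calc (p ^ (1 - (2*L+1-(n:ℤ))) * Z) * p ^ (2*L + (n:ℤ))
          = (p ^ (1 - (2*L+1-(n:ℤ))) * p ^ (2*L + (n:ℤ))) * Z := by ring
        _ = (p*p) ^ n * Z := by rw [k4]
    rw [← expand, ← expand2, h]
  have e2 : u * X2 * Xa - u * (Y1 * Y2) = u ^ n * Z := by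
    rw [hX2, hXa, hY1, hY2, hZ, ← zpow_natCast u n]
    have m1 : u ^ (2*L+1) = u ^ (2*L) * u := by rw [zpow_add₀ hu0', zpow_one]
    have m2 : u ^ ((n:ℤ)-1) = u ^ (n:ℤ) / u := by rw [zpow_sub₀ hu0', zpow_one]
    have m3 : u ^ (2*L+1-(n:ℤ)) = u ^ (2*L) * u / u ^ (n:ℤ) := by
      rw [zpow_sub₀ hu0', zpow_add₀ hu0', zpow_one]
    have hua : u ^ (n:ℤ) ≠ 0 := zpow_ne_zero _ hu0'
    rw [m1, m2, m3]
    field_simp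
    ring
  have e3 : (u - p*p) * (Y1 * Y2) = ((p*p) ^ n - u ^ n) * Z := by
    linear_combination e1 - e2
  -- sign facts
  have hY1pos : 0 < Y1 := by
    have : 1 < u ^ (2*L+1) := one_lt_zpow₀ hu (by omega)
    rw [hY1]; apply div_pos <;> linarith
  have hY2nn : 0 ≤ Y2 := by
    have : 1 ≤ u ^ ((n:ℤ)-1) := one_le_zpow₀ hu.le (by omega)
    rw [hY2]; apply div_nonneg <;> linarith
  have hZnn : 0 ≤ Z := by
    have : 1 ≤ u ^ (2*L+1-(n:ℤ)) := one_le_zpow₀ hu.le (by omega)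
    rw [hZ]; apply div_nonneg <;> linarith
  have htu : p * p ≠ u := by
    rw [hu_def]
    intro hc
    exact hpq (mul_left_cancel₀ hp0' hc)
  have hZpos_of_a1 : (n:ℤ) = 1 → 0 < Z := by
    intro ha1
    have : 1 < u ^ (2*L+1-(n:ℤ)) := one_lt_zpow₀ hu (by omega)
    rw [hZ]; apply div_pos <;> linarith
  have hY20_imp : Y2 = 0 → (n:ℤ) = 1 := by
    intro hY20
    by_contra hne
    have : 1 < u ^ ((n:ℤ)-1) := one_lt_zpow₀ hu (by omega)
    rw [hY2, div_eq_zero_iff] at hY20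
    rcases hY20 with h' | h' <;> [linarith; exact hu1 h']
  rcases lt_or_gt_of_ne htu with hlt | hgt
  · -- p*p < u
    have hpow : (p*p) ^ n < u ^ n := pow_lt_pow_left₀ hlt (by positivity) hn0
    have hrhs : ((p*p) ^ n - u ^ n) * Z ≤ 0 :=
      mul_nonpos_of_nonpos_of_nonneg (by linarith) hZnn
    have hlhs : 0 ≤ (u - p*p) * (Y1 * Y2) :=
      mul_nonneg (by linarith) (mul_nonneg hY1pos.le hY2nn)
    have hz1 : (u - p*p) * (Y1 * Y2) = 0 := le_antisymm (e3 ▸ hrhs) hlhs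
    have hz2 : ((p*p) ^ n - u ^ n) * Z = 0 := by rw [← e3]; exact hz1
    have hZ0 : Z = 0 := by
      rcases mul_eq_zero.1 hz2 with h' | h'
      · linarith
      · exact h'
    have hY20 : Y2 = 0 := by
      rcases mul_eq_zero.1 hz1 with h' | h'
      · linarith
      · rcases mul_eq_zero.1 h' with h'' | h''
        · linarith
        · exact h''
    have := hZpos_of_a1 (hY20_imp hY20)
    linarith
  · -- u < p*p
    have hpow : u ^ n < (p*p) ^ n := pow_lt_pow_left₀ hgt hu0.le hn0
    have hrhs : 0 ≤ ((p*p) ^ n - u ^ n) * Z := mul_nonneg (by linarith) hZnn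
    have hlhs : (u - p*p) * (Y1 * Y2) ≤ 0 :=
      mul_nonpos_of_nonpos_of_nonneg (by linarith) (mul_nonneg hY1pos.le hY2nn)
    have hz1 : (u - p*p) * (Y1 * Y2) = 0 := le_antisymm hlhs (e3 ▸ hrhs)
    have hz2 : ((p*p) ^ n - u ^ n) * Z = 0 := by rw [← e3]; exact hz1
    have hZ0 : Z = 0 := by
      rcases mul_eq_zero.1 hz2 with h' | h'
      · linarith
      · exact h'
    have hY20 : Y2 = 0 := by
      rcases mul_eq_zero.1 hz1 with h' | h'
      · linarith
      · rcases mul_eq_zero.1 h' with h'' | h''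
        · linarith
        · exact h''
    have := hZpos_of_a1 (hY20_imp hY20)
    linarith
end

section
/- Let p, q be reals with p > 1 and q > 1, let n be a natural number and m a real number. On ℝ^{n+1} with standard basis e_0, …, e_n define linear operators (the Gel'fand–Zetlin realization (3.2) of U_{p,q}[gl(2)] with highest weight [m_{12}, m_{22}] = [m, m−n], where e_k corresponds to the pattern with m_{11} = m − n + k): H1·e_k = (m − n + k)·e_k, H2·e_k = (m − k)·e_k, A·e_k = √([n−k]_{p,q}·[k+1]_{p,q})·e_{k+1} for k < n and A·e_n = 0, B·e_k = √([n−k+1]_{p,q}·[k]_{p,q})·e_{k−1} for k > 0 and B·e_0 = 0, and the diagonal operator K·e_k = (q/p)^{n−k}·[2k−n]_{p,q}·e_k. Then these operators satisfy all the defining relations of U_{p,q}[gl(2)]: H1·H2 = H2·H1, H1·A − A·H1 = A, H2·A − A·H2 = −A, H1·B − B·H1 = −B, H2·B − B·H2 = B, and A·B − B·A = K. (Here K realizes the operator (q/p)^{L − h/2}·[h] of relation (2.1e), since on e_k the maximal-spin operator L has eigenvalue n/2 and h = H1 − H2 has eigenvalue 2k − n.) -/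
/-- The standard basis vector `e_k` of `ℝ^{n+1}`. -/
def stdVec (n : ℕ) (k : Fin (n + 1)) : Fin (n + 1) → ℝ := Pi.single k 1

lemma pqBracket_zero (p q : ℝ) : pqBracket p q 0 = 0 := by
  simp [pqBracket]

lemma pqBracket_pos (p q : ℝ) (hp : 1 < p) (hq : 1 < q) (x : ℤ) (hx : 0 < x) :
    0 < pqBracket p q x := by
  have hp0 : (0:ℝ) < p := lt_trans one_pos hp
  have hd : 0 < q - p⁻¹ := by
    have : p⁻¹ < 1 := inv_lt_one_of_one_lt₀ hp
    linarith
  have h1 : 1 < q ^ x := one_lt_zpow₀ hq (by omega)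
  have h2 : p ^ (-x) < 1 := by
    rw [zpow_neg]
    have : 1 < p ^ x := one_lt_zpow₀ hp (by omega)
    exact inv_lt_one_of_one_lt₀ this
  exact div_pos (by linarith) hd

lemma pq_key (p q : ℝ) (hp : 1 < p) (hq : 1 < q) (a b : ℤ) :
    pqBracket p q (a - b + 1) * pqBracket p q b
      - pqBracket p q (a - b) * pqBracket p q (b + 1)
      = (q / p) ^ (a - b) * pqBracket p q (2 * b - a) := by
  have hp0 : (0:ℝ) < p := lt_trans one_pos hp
  have hq0 : (0:ℝ) < q := lt_trans one_pos hq
  have hp' : p ≠ 0 := ne_of_gt hp0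
  have hq' : q ≠ 0 := ne_of_gt hq0
  have hd : q - p⁻¹ ≠ 0 := by
    have : p⁻¹ < 1 := inv_lt_one_of_one_lt₀ hp
    nlinarith
  have main : (q ^ (a - b + 1) - p ^ (-(a - b + 1))) * (q ^ b - p ^ (-b))
      - (q ^ (a - b) - p ^ (-(a - b))) * (q ^ (b + 1) - p ^ (-(b + 1)))
      = (q / p) ^ (a - b) * (q ^ (2 * b - a) - p ^ (-(2 * b - a))) * (q - p⁻¹) := by
    have h2 : (2:ℤ) * b - a = b + (b - a) := by ring
    have h2' : -((2:ℤ) * b - a) = (a - b) - b := by ring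
    rw [h2', h2]
    simp only [neg_add, neg_sub, div_zpow, zpow_add₀ hp', zpow_add₀ hq', zpow_sub₀ hp',
      zpow_sub₀ hq', zpow_one, zpow_neg]
    have ha : (p:ℝ) ^ a ≠ 0 := zpow_ne_zero a hp'
    have hb : (p:ℝ) ^ b ≠ 0 := zpow_ne_zero b hp'
    have hqa : (q:ℝ) ^ a ≠ 0 := zpow_ne_zero a hq'
    have hqb : (q:ℝ) ^ b ≠ 0 := zpow_ne_zero b hq'
    field_simp
    ring
  unfold pqBracket
  rw [div_mul_div_comm, div_mul_div_comm, div_sub_div_same, main, mul_div_assoc,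
    div_mul_eq_div_div, div_self hd]
  ring

/-- The Gel'fand–Zetlin realization (3.2) of `U_{p,q}[gl(2)]` on `ℝ^{n+1}` satisfies all the
defining relations of `U_{p,q}[gl(2)]`. -/
theorem gz_operators_satisfy_relations (p q : ℝ) (hp : 1 < p) (hq : 1 < q) (n : ℕ) (m : ℝ)
    (H1 H2 A B K : Module.End ℝ (Fin (n + 1) → ℝ))
    (hH1 : ∀ k : Fin (n + 1),
      H1 (stdVec n k) = (m - (n : ℝ) + ((k : ℕ) : ℝ)) • stdVec n k)
    (hH2 : ∀ k : Fin (n + 1),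
      H2 (stdVec n k) = (m - ((k : ℕ) : ℝ)) • stdVec n k)
    (hA : ∀ k : Fin (n + 1),
      A (stdVec n k) =
        if h : (k : ℕ) < n then
          Real.sqrt (pqBracket p q ((n : ℤ) - ((k : ℕ) : ℤ)) *
              pqBracket p q (((k : ℕ) : ℤ) + 1)) •
            stdVec n (⟨(k : ℕ) + 1, by omega⟩ : Fin (n + 1))
        else 0)
    (hB : ∀ k : Fin (n + 1),
      B (stdVec n k) =
        if h : 0 < (k : ℕ) then
          Real.sqrt (pqBracket p q ((n : ℤ) - ((k : ℕ) : ℤ) + 1) *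
              pqBracket p q ((k : ℕ) : ℤ)) •
            stdVec n (⟨(k : ℕ) - 1, by omega⟩ : Fin (n + 1))
        else 0)
    (hK : ∀ k : Fin (n + 1),
      K (stdVec n k) =
        ((q / p) ^ ((n : ℤ) - ((k : ℕ) : ℤ)) *
            pqBracket p q (2 * ((k : ℕ) : ℤ) - (n : ℤ))) • stdVec n k) :
    H1 * H2 = H2 * H1 ∧
    H1 * A - A * H1 = A ∧
    H2 * A - A * H2 = -A ∧
    H1 * B - B * H1 = -B ∧
    H2 * B - B * H2 = B ∧
    A * B - B * A = K := by
  have extb : ∀ (f g : Module.End ℝ (Fin (n + 1) → ℝ)),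
      (∀ k, f (stdVec n k) = g (stdVec n k)) → f = g := by
    intro f g h
    apply (Pi.basisFun ℝ (Fin (n + 1))).ext
    intro i
    simpa [stdVec, Pi.basisFun_apply] using h i
  refine ⟨?_, ?_, ?_, ?_, ?_, ?_⟩
  · apply extb; intro k
    simp only [Module.End.mul_apply, hH1, hH2, map_smul, smul_smul]
    ring_nf
  · apply extb; intro k
    by_cases h : (k : ℕ) < n
    · rw [LinearMap.sub_apply, Module.End.mul_apply, Module.End.mul_apply, hH1 k, map_smul,
        hA k, dif_pos h, map_smul, hH1 ⟨(k : ℕ) + 1, by omega⟩, smul_smul, smul_smul,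
        ← sub_smul]
      congr 1
      simp only [Fin.val_mk]
      push_cast
      ring
    · simp [LinearMap.sub_apply, Module.End.mul_apply, hH1, hA, h]
  · apply extb; intro k
    by_cases h : (k : ℕ) < n
    · rw [LinearMap.neg_apply, LinearMap.sub_apply, Module.End.mul_apply, Module.End.mul_apply,
        hH2 k, map_smul, hA k, dif_pos h, map_smul, hH2 ⟨(k : ℕ) + 1, by omega⟩, smul_smul,
        smul_smul, ← sub_smul, ← neg_smul]
      congr 1
      simp only [Fin.val_mk]
      push_cast
      ring
    · simp [LinearMap.sub_apply, Module.End.mul_apply, hH2, hA, h]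
  · apply extb; intro k
    by_cases h : 0 < (k : ℕ)
    · rw [LinearMap.neg_apply, LinearMap.sub_apply, Module.End.mul_apply, Module.End.mul_apply,
        hH1 k, map_smul, hB k, dif_pos h, map_smul, hH1 ⟨(k : ℕ) - 1, by omega⟩, smul_smul,
        smul_smul, ← sub_smul, ← neg_smul]
      congr 1
      simp only [Fin.val_mk]
      have hc : (((k : ℕ) - 1 : ℕ) : ℝ) = ((k : ℕ) : ℝ) - 1 := by
        have := Nat.cast_sub (R := ℝ) (by omega : 1 ≤ (k : ℕ))
        simpa using this
      rw [hc]
      ring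
    · simp [LinearMap.sub_apply, Module.End.mul_apply, hH1, hB, h]
  · apply extb; intro k
    by_cases h : 0 < (k : ℕ)
    · rw [LinearMap.sub_apply, Module.End.mul_apply, Module.End.mul_apply,
        hH2 k, map_smul, hB k, dif_pos h, map_smul, hH2 ⟨(k : ℕ) - 1, by omega⟩, smul_smul,
        smul_smul, ← sub_smul]
      congr 1
      simp only [Fin.val_mk]
      have hc : (((k : ℕ) - 1 : ℕ) : ℝ) = ((k : ℕ) : ℝ) - 1 := by
        have := Nat.cast_sub (R := ℝ) (by omega : 1 ≤ (k : ℕ))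
        simpa using this
      rw [hc]
      ring
    · simp [LinearMap.sub_apply, Module.End.mul_apply, hH2, hB, h]
  · apply extb; intro k
    have hkn : (k : ℕ) ≤ n := by omega
    by_cases h0 : 0 < (k : ℕ) <;> by_cases h1 : (k : ℕ) < n
    · -- 0 < k < n
      have hc : (((k : ℕ) - 1 : ℕ) : ℤ) = ((k : ℕ) : ℤ) - 1 := by
        have := Nat.cast_sub (R := ℤ) (by omega : 1 ≤ (k : ℕ)); simpa using this
      rw [LinearMap.sub_apply, Module.End.mul_apply, Module.End.mul_apply, hB k, dif_pos h0,
        map_smul, hA ⟨(k : ℕ) - 1, by omega⟩]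
      simp only [Fin.val_mk]
      rw [dif_pos (by omega : (k : ℕ) - 1 < n), hA k, dif_pos h1, map_smul,
        hB ⟨(k : ℕ) + 1, by omega⟩]
      simp only [Fin.val_mk]
      rw [dif_pos (by omega : 0 < (k : ℕ) + 1), hK k]
      simp only [Nat.sub_add_cancel (by omega : 1 ≤ (k : ℕ)), Nat.add_sub_cancel, Fin.eta,
        smul_smul]
      rw [← sub_smul]
      congr 1
      push_cast [hc]
      rw [show (n : ℤ) - (((k : ℕ) : ℤ) - 1) = (n : ℤ) - ((k : ℕ) : ℤ) + 1 from by ring,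
        show ((k : ℕ) : ℤ) - 1 + 1 = ((k : ℕ) : ℤ) from by ring,
        show (n : ℤ) - (((k : ℕ) : ℤ) + 1) + 1 = (n : ℤ) - ((k : ℕ) : ℤ) from by ring]
      have hnn : 0 ≤ pqBracket p q ((n : ℤ) - ((k : ℕ) : ℤ) + 1) * pqBracket p q ((k : ℕ) : ℤ) :=
        le_of_lt (mul_pos (pqBracket_pos p q hp hq _ (by omega))
          (pqBracket_pos p q hp hq _ (by omega)))
      have hnn2 : 0 ≤ pqBracket p q ((n : ℤ) - ((k : ℕ) : ℤ)) *
          pqBracket p q (((k : ℕ) : ℤ) + 1) :=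
        le_of_lt (mul_pos (pqBracket_pos p q hp hq _ (by omega))
          (pqBracket_pos p q hp hq _ (by omega)))
      rw [Real.mul_self_sqrt hnn, Real.mul_self_sqrt hnn2]
      exact pq_key p q hp hq (n : ℤ) ((k : ℕ) : ℤ)
    · -- k = n > 0
      have hc : (((k : ℕ) - 1 : ℕ) : ℤ) = ((k : ℕ) : ℤ) - 1 := by
        have := Nat.cast_sub (R := ℤ) (by omega : 1 ≤ (k : ℕ)); simpa using this
      rw [LinearMap.sub_apply, Module.End.mul_apply, Module.End.mul_apply, hB k, dif_pos h0,
        map_smul, hA ⟨(k : ℕ) - 1, by omega⟩]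
      simp only [Fin.val_mk]
      rw [dif_pos (by omega : (k : ℕ) - 1 < n), hA k, dif_neg h1, map_zero, sub_zero, hK k]
      simp only [Nat.sub_add_cancel (by omega : 1 ≤ (k : ℕ)), Fin.eta, smul_smul]
      congr 1
      push_cast [hc]
      rw [show (n : ℤ) - (((k : ℕ) : ℤ) - 1) = (n : ℤ) - ((k : ℕ) : ℤ) + 1 from by ring,
        show ((k : ℕ) : ℤ) - 1 + 1 = ((k : ℕ) : ℤ) from by ring]
      have hnn : 0 ≤ pqBracket p q ((n : ℤ) - ((k : ℕ) : ℤ) + 1) * pqBracket p q ((k : ℕ) : ℤ) :=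
        le_of_lt (mul_pos (pqBracket_pos p q hp hq _ (by omega))
          (pqBracket_pos p q hp hq _ (by omega)))
      rw [Real.mul_self_sqrt hnn]
      have hkey := pq_key p q hp hq (n : ℤ) ((k : ℕ) : ℤ)
      rw [show (n : ℤ) - ((k : ℕ) : ℤ) = 0 from by omega, pqBracket_zero] at hkey
      rw [show (n : ℤ) - ((k : ℕ) : ℤ) = 0 from by omega]
      linarith [hkey]
    · -- k = 0 < n
      rw [LinearMap.sub_apply, Module.End.mul_apply, Module.End.mul_apply, hB k, dif_neg h0,
        map_zero, zero_sub, hA k, dif_pos h1, map_smul, hB ⟨(k : ℕ) + 1, by omega⟩]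
      simp only [Fin.val_mk]
      rw [dif_pos (by omega : 0 < (k : ℕ) + 1), hK k]
      simp only [Nat.add_sub_cancel, Fin.eta, smul_smul]
      rw [← neg_smul]
      congr 1
      push_cast
      rw [show (n : ℤ) - (((k : ℕ) : ℤ) + 1) + 1 = (n : ℤ) - ((k : ℕ) : ℤ) from by ring]
      have hnn2 : 0 ≤ pqBracket p q ((n : ℤ) - ((k : ℕ) : ℤ)) *
          pqBracket p q (((k : ℕ) : ℤ) + 1) :=
        le_of_lt (mul_pos (pqBracket_pos p q hp hq _ (by omega))
          (pqBracket_pos p q hp hq _ (by omega)))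
      rw [Real.mul_self_sqrt hnn2]
      have hkey := pq_key p q hp hq (n : ℤ) ((k : ℕ) : ℤ)
      rw [show ((k : ℕ) : ℤ) = 0 from by omega] at hkey ⊢
      rw [pqBracket_zero] at hkey
      simp only [sub_zero, mul_zero, zero_mul] at hkey ⊢
      linarith [hkey]
    · -- n = 0, k = 0
      rw [LinearMap.sub_apply, Module.End.mul_apply, Module.End.mul_apply, hB k, dif_neg h0,
        map_zero, hA k, dif_neg h1, map_zero, sub_zero, hK k]
      rw [show 2 * ((k : ℕ) : ℤ) - (n : ℤ) = 0 from by omega, pqBracket_zero]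
      simp
end
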